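/- Let α_m : M_m(ℂ) → M_{m+1}(ℂ) be the embedding adding a zero last row and column, and β_m : M_{m+1}(ℂ) → M_m(ℂ) the map deleting the last row and column. Then for every a ∈ M_{m+1}(ℂ) with ‖a‖_OP ≤ 1, ‖a − α_m(β_m(a))‖_HS < sqrt(2/m). -/

import Mathlib

/-- Euclidean norm of a complex `m`-vector. -/
noncomputable def vecNorm {m : ℕ} (ξ : Fin m → ℂ) : ℝ :=
  Real.sqrt (∑ i, ‖ξ i‖ ^ 2)

/-- Operator norm of an `m × m` complex matrix:
the supremum of `‖a ξ‖` over unit vectors `ξ`. -/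
noncomputable def opNorm {m : ℕ} (a : Matrix (Fin m) (Fin m) ℂ) : ℝ :=
  sSup {r : ℝ | ∃ ξ : Fin m → ℂ, vecNorm ξ = 1 ∧ r = vecNorm (a.mulVec ξ)}

/-- Normalized Hilbert–Schmidt norm of an `m × m` complex matrix. -/
noncomputable def hsNorm {m : ℕ} (a : Matrix (Fin m) (Fin m) ℂ) : ℝ :=
  Real.sqrt ((1 / (m : ℝ)) * ∑ i, ∑ j, ‖a i j‖ ^ 2)

/-- Embedding `M_m → M_{m+1}` by adding a zero last row and column. -/
def matAlpha {m : ℕ} (a : Matrix (Fin m) (Fin m) ℂ) :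
    Matrix (Fin (m + 1)) (Fin (m + 1)) ℂ :=
  Matrix.of fun i j =>
    if hi : (i : ℕ) < m then if hj : (j : ℕ) < m then a ⟨i, hi⟩ ⟨j, hj⟩ else 0 else 0

/-- Compression `M_{m+1} → M_m` deleting the last row and column. -/
def matBeta {m : ℕ} (a : Matrix (Fin (m + 1)) (Fin (m + 1)) ℂ) :
    Matrix (Fin m) (Fin m) ℂ :=
  Matrix.of fun i j => a i.castSucc j.castSucc

/-!
The matrix `a - α(β a)` agrees with `a` on the last row and column and vanishes elsewhere, so its
unnormalized squared Hilbert–Schmidt norm is at most `‖last row‖² + ‖last column‖²`. For a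
contraction every column (the image of a basis vector) and every row has norm at most `1`,
whence the normalized squared norm is at most `2 / (m + 1) < 2 / m`.
-/

open Matrix

lemma vecNorm_eq_norm_toLp {n : ℕ} (ξ : Fin n → ℂ) :
    vecNorm ξ = ‖WithLp.toLp 2 ξ‖ := by
  rw [EuclideanSpace.norm_eq]; rfl

lemma vecNorm_sq {n : ℕ} (ξ : Fin n → ℂ) : vecNorm ξ ^ 2 = ∑ i, ‖ξ i‖ ^ 2 :=
  Real.sq_sqrt (by positivity)

lemma vecNorm_nonneg {n : ℕ} (ξ : Fin n → ℂ) : 0 ≤ vecNorm ξ :=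
  Real.sqrt_nonneg _

lemma vecNorm_smul {n : ℕ} (z : ℂ) (ξ : Fin n → ℂ) : vecNorm (z • ξ) = ‖z‖ * vecNorm ξ := by
  simp only [vecNorm_eq_norm_toLp, WithLp.toLp_smul, norm_smul]

lemma norm_le_vecNorm {n : ℕ} (ξ : Fin n → ℂ) (i : Fin n) : ‖ξ i‖ ≤ vecNorm ξ := by
  rw [vecNorm_eq_norm_toLp]
  exact PiLp.norm_apply_le (WithLp.toLp 2 ξ) i

lemma vecNorm_single_one {n : ℕ} (j : Fin n) : vecNorm (Pi.single j (1 : ℂ)) = 1 := by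
  rw [vecNorm_eq_norm_toLp, PiLp.toLp_single, PiLp.norm_single, norm_one]

lemma bddAbove_opNorm_set {n : ℕ} (a : Matrix (Fin n) (Fin n) ℂ) :
    BddAbove {r : ℝ | ∃ ξ : Fin n → ℂ, vecNorm ξ = 1 ∧ r = vecNorm (a *ᵥ ξ)} := by
  refine ⟨‖toEuclideanCLM (n := Fin n) (𝕜 := ℂ) a‖, ?_⟩
  rintro r ⟨ξ, hξ, rfl⟩
  rw [vecNorm_eq_norm_toLp] at hξ ⊢
  simpa [← toEuclideanCLM_toLp, hξ] using (toEuclideanCLM (𝕜 := ℂ) a).le_opNorm (WithLp.toLp 2 ξ)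

lemma vecNorm_mulVec_le {n : ℕ} (a : Matrix (Fin n) (Fin n) ℂ) (ξ : Fin n → ℂ) :
    vecNorm (a *ᵥ ξ) ≤ opNorm a * vecNorm ξ := by
  rcases (vecNorm_nonneg ξ).eq_or_lt with hξ | hξ
  · obtain rfl : ξ = 0 := by simpa [vecNorm_eq_norm_toLp] using hξ.symm
    simp [vecNorm_eq_norm_toLp]
  · set c := vecNorm ξ
    have hunit : vecNorm ((c⁻¹ : ℂ) • ξ) = 1 := by
      rw [vecNorm_smul, norm_inv, Complex.norm_real, Real.norm_of_nonneg hξ.le,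
        inv_mul_cancel₀ hξ.ne']
    have hle := le_csSup (bddAbove_opNorm_set a) ⟨_, hunit, rfl⟩
    rw [mulVec_smul, vecNorm_smul, norm_inv, Complex.norm_real, Real.norm_of_nonneg hξ.le,
      inv_mul_le_iff₀ hξ] at hle
    rwa [mul_comm]

section Contraction

variable {n : ℕ} {a : Matrix (Fin n) (Fin n) ℂ}

lemma vecNorm_mulVec_le_of_opNorm_le_one (ha : opNorm a ≤ 1) (ξ : Fin n → ℂ) :
    vecNorm (a *ᵥ ξ) ≤ vecNorm ξ :=
  (vecNorm_mulVec_le a ξ).trans (mul_le_of_le_one_left (vecNorm_nonneg ξ) ha)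

lemma vecNorm_col_le_one (ha : opNorm a ≤ 1) (j : Fin n) : vecNorm (a.col j) ≤ 1 := by
  simpa [mulVec_single_one, vecNorm_single_one] using
    vecNorm_mulVec_le_of_opNorm_le_one ha (Pi.single j 1)

/-- The `i`-th entry of `a` applied to the conjugate of row `i` is `‖row i‖²`, so `‖row i‖² ≤ ‖row i‖`. -/
lemma vecNorm_row_le_one (ha : opNorm a ≤ 1) (i : Fin n) : vecNorm (a.row i) ≤ 1 := by
  set r := vecNorm (a.row i)
  have hentry : (a *ᵥ star (a.row i)) i = ((r ^ 2 : ℝ) : ℂ) := by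
    simp only [mulVec, dotProduct, Pi.star_apply, row_apply, RCLike.star_def, Complex.mul_conj',
      r, vecNorm_sq]
    push_cast; rfl
  have hstar : vecNorm (star (a.row i)) = r := by
    simp [vecNorm, r]
  have h : r ^ 2 ≤ r := by
    calc r ^ 2 = ‖(a *ᵥ star (a.row i)) i‖ := by
          rw [hentry, Complex.norm_real, Real.norm_of_nonneg (sq_nonneg r)]
      _ ≤ vecNorm (a *ᵥ star (a.row i)) := norm_le_vecNorm _ i
      _ ≤ r := hstar ▸ vecNorm_mulVec_le_of_opNorm_le_one ha _
  nlinarith [vecNorm_nonneg (a.row i)]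

end Contraction

section Corner

variable {m : ℕ}

@[simp]
lemma matAlpha_castSucc_castSucc (b : Matrix (Fin m) (Fin m) ℂ) (i j : Fin m) :
    matAlpha b i.castSucc j.castSucc = b i j := by
  simp [matAlpha]

@[simp]
lemma matAlpha_last_left (b : Matrix (Fin m) (Fin m) ℂ) (j : Fin (m + 1)) :
    matAlpha b (Fin.last m) j = 0 := by
  simp [matAlpha]

@[simp]
lemma matAlpha_last_right (b : Matrix (Fin m) (Fin m) ℂ) (i : Fin (m + 1)) :
    matAlpha b i (Fin.last m) = 0 := by
  simp [matAlpha]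

@[simp]
lemma matBeta_apply (a : Matrix (Fin (m + 1)) (Fin (m + 1)) ℂ) (i j : Fin m) :
    matBeta a i j = a i.castSucc j.castSucc :=
  rfl

lemma sum_norm_sq_sub_matAlpha_matBeta_le (a : Matrix (Fin (m + 1)) (Fin (m + 1)) ℂ) :
    ∑ i, ∑ j, ‖(a - matAlpha (matBeta a)) i j‖ ^ 2 ≤
      vecNorm (a.row (Fin.last m)) ^ 2 + vecNorm (a.col (Fin.last m)) ^ 2 := by
  simp only [vecNorm_sq, Fin.sum_univ_castSucc, Matrix.sub_apply, matAlpha_castSucc_castSucc,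
    matBeta_apply, matAlpha_last_left, matAlpha_last_right, sub_self, sub_zero, row_apply, col_apply,
    norm_zero, zero_pow two_ne_zero, Finset.sum_const_zero, zero_add]
  linarith [sq_nonneg ‖a (Fin.last m) (Fin.last m)‖]

end Corner

/-- A contraction in `M_{m+1}` is within `√(2/m)` in normalized HS norm of its
corner compression. -/
theorem hsNorm_sub_corner_lt {m : ℕ} (hm : 0 < m)
    (a : Matrix (Fin (m + 1)) (Fin (m + 1)) ℂ) (ha : opNorm a ≤ 1) :
    hsNorm (a - matAlpha (matBeta a)) < Real.sqrt (2 / m) := by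
  have hS : ∑ i, ∑ j, ‖(a - matAlpha (matBeta a)) i j‖ ^ 2 ≤ 2 := by
    have hrow := vecNorm_row_le_one ha (Fin.last m)
    have hcol := vecNorm_col_le_one ha (Fin.last m)
    have hsum := sum_norm_sq_sub_matAlpha_matBeta_le a
    nlinarith [vecNorm_nonneg (a.row (Fin.last m)), vecNorm_nonneg (a.col (Fin.last m))]
  have hm' : (0 : ℝ) < m := by exact_mod_cast hm
  apply Real.sqrt_lt_sqrt (by positivity)
  calc 1 / ((m + 1 : ℕ) : ℝ) * ∑ i, ∑ j, ‖(a - matAlpha (matBeta a)) i j‖ ^ 2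
      ≤ 1 / ((m + 1 : ℕ) : ℝ) * 2 := by gcongr
    _ = 2 / (m + 1) := by push_cast; ring
    _ < 2 / m := by gcongr; linarith
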